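/- Let N ∈ ℕ ∪ {0} and a, b ∈ ℝ. In polar coordinates y = (r cos θ, r sin θ), define φ(y) = (2 r^{N+1}/(1 + r^{2N+2}))·(a·cos((N+1)θ) + b·sin((N+1)θ)). Then Δφ(y) + 8(N+1)² |y|^{2N} (1+|y|^{2N+2})^{−2} φ(y) = 0 for every y ∈ ℝ² ∖ {0}. -/

import Mathlib

/-!
`w ↦ 2⟪k, w⟫ / (1 + ‖w‖²)` is a coordinate of the inverse stereographic projection `ℂ → S²`, i.e. a
first spherical harmonic pulled back to the plane. Since the round metric is `4|dw|²/(1 + |w|²)²`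
and first harmonics have eigenvalue `2`, it satisfies `ΔF + 8 F / (1 + |w|²)² = 0`. Composing with
the holomorphic map `g(y) = y^(N+1)` multiplies the Laplacian by `|g'|² = (N+1)² |y|^(2N)`, and by
De Moivre `F(y^(N+1)) = φ(y)` with `k = a + b i`.
-/

/-- The Laplacian `Δ = ∂²/∂y₁² + ∂²/∂y₂²` on `ℝ² ≅ ℂ`. -/
noncomputable def lapC (u : ℂ → ℝ) (y : ℂ) : ℝ :=
  deriv (deriv fun s : ℝ => u (y + (s : ℂ))) 0 +
  deriv (deriv fun s : ℝ => u (y + (s : ℂ) * Complex.I)) 0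

open Filter Topology
open scoped RealInnerProductSpace

theorem deriv_deriv_div_eq {p q p' q' : ℝ → ℝ} {p'' q'' x : ℝ}
    (hp : ∀ s, HasDerivAt p (p' s) s) (hq : ∀ s, HasDerivAt q (q' s) s)
    (hp' : HasDerivAt p' p'' x) (hq' : HasDerivAt q' q'' x) (hq0 : ∀ s, q s ≠ 0) :
    deriv (deriv fun s => p s / q s) x =
      p'' / q x - 2 * p' x * q' x / q x ^ 2 - p x * q'' / q x ^ 2
        + 2 * p x * q' x ^ 2 / q x ^ 3 := by
  have hfirst : deriv (fun s => p s / q s) = fun s => (p' s * q s - p s * q' s) / q s ^ 2 :=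
    funext fun s => ((hp s).div (hq s) (hq0 s)).deriv
  rw [hfirst, (((hp'.fun_mul (hq x)).fun_sub ((hp x).fun_mul hq')).fun_div
    ((hq x).fun_pow 2) (pow_ne_zero 2 (hq0 x))).deriv]
  have hqx := hq0 x
  field_simp
  ring

section InnerProductSpace

variable {E : Type*} [NormedAddCommGroup E] [InnerProductSpace ℝ E]

noncomputable def sphereMode (k w : E) : ℝ := 2 * ⟪k, w⟫ / (1 + ‖w‖ ^ 2)

theorem deriv_deriv_sphereMode_comp (k : E) {c c' : ℝ → E} {c'' : E}
    (hc : ∀ s, HasDerivAt c (c' s) s) (hc' : HasDerivAt c' c'' 0) :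
    deriv (deriv fun s => sphereMode k (c s)) 0 =
      2 * (⟪k, c''⟫ / (1 + ‖c 0‖ ^ 2)
        - 4 * ⟪k, c' 0⟫ * ⟪c 0, c' 0⟫ / (1 + ‖c 0‖ ^ 2) ^ 2
        - 2 * ⟪k, c 0⟫ * (‖c' 0‖ ^ 2 + ⟪c 0, c''⟫) / (1 + ‖c 0‖ ^ 2) ^ 2
        + 8 * ⟪k, c 0⟫ * ⟪c 0, c' 0⟫ ^ 2 / (1 + ‖c 0‖ ^ 2) ^ 3) := by
  have hnum s : HasDerivAt (fun s => 2 * ⟪k, c s⟫) (2 * ⟪k, c' s⟫) s := by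
    simpa using ((hasDerivAt_const s k).inner ℝ (hc s)).const_mul 2
  have hden s : HasDerivAt (fun s => 1 + ‖c s‖ ^ 2) (2 * ⟪c s, c' s⟫) s :=
    (hc s).norm_sq.const_add 1
  have hnum' : HasDerivAt (fun s => 2 * ⟪k, c' s⟫) (2 * ⟪k, c''⟫) 0 := by
    simpa using ((hasDerivAt_const 0 k).inner ℝ hc').const_mul 2
  have hden' : HasDerivAt (fun s => 2 * ⟪c s, c' s⟫)
      (2 * (‖c' 0‖ ^ 2 + ⟪c 0, c''⟫)) 0 := by
    refine (((hc 0).inner ℝ hc').const_mul 2).congr_deriv ?_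
    rw [real_inner_self_eq_norm_sq]; ring
  unfold sphereMode
  rw [deriv_deriv_div_eq hnum hden hnum' hden' (fun s => by positivity)]
  ring

end InnerProductSpace

theorem HasDerivAt.comp_line {f : ℂ → ℂ} {f' y e : ℂ} {s : ℝ}
    (hf : HasDerivAt f f' (y + s * e)) : HasDerivAt (fun t : ℝ => f (y + t * e)) (f' * e) s := by
  simpa using (hf.comp (s : ℂ) (((hasDerivAt_id (s : ℂ)).mul_const e).const_add y)).comp_ofReal

theorem deriv_deriv_sphereMode_comp_line (k : ℂ) {g g' : ℂ → ℂ} {g'' y : ℂ}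
    (hg : ∀ z, HasDerivAt g (g' z) z) (hg' : HasDerivAt g' g'' y) (e : ℂ) :
    deriv (deriv fun s : ℝ => sphereMode k (g (y + s * e))) 0 =
      2 * (⟪k, g'' * e * e⟫ / (1 + ‖g y‖ ^ 2)
        - 4 * ⟪k, g' y * e⟫ * ⟪g y, g' y * e⟫ / (1 + ‖g y‖ ^ 2) ^ 2
        - 2 * ⟪k, g y⟫ * (‖g' y * e‖ ^ 2 + ⟪g y, g'' * e * e⟫) / (1 + ‖g y‖ ^ 2) ^ 2
        + 8 * ⟪k, g y⟫ * ⟪g y, g' y * e⟫ ^ 2 / (1 + ‖g y‖ ^ 2) ^ 3) := by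
  have hline := deriv_deriv_sphereMode_comp k (c := fun s : ℝ => g (y + s * e))
    (fun s => (hg _).comp_line) ((HasDerivAt.comp_line (s := 0) (by simpa using hg')).mul_const e)
  simpa using hline

theorem lapC_sphereMode_comp (k : ℂ) {g g' : ℂ → ℂ} {g'' y : ℂ}
    (hg : ∀ z, HasDerivAt g (g' z) z) (hg' : HasDerivAt g' g'' y) :
    lapC (fun z => sphereMode k (g z)) y =
      -(8 * ‖g' y‖ ^ 2 / (1 + ‖g y‖ ^ 2) ^ 2 * sphereMode k (g y)) := by
  have hx := deriv_deriv_sphereMode_comp_line k hg hg' 1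
  simp only [mul_one] at hx
  -- The `g''` terms cancel because `1 ^ 2 + I ^ 2 = 0`: this is the conformal invariance of `Δ`.
  rw [lapC, hx, deriv_deriv_sphereMode_comp_line k hg hg' Complex.I, sphereMode]
  have hpos : 0 < 1 + ‖g y‖ ^ 2 := by positivity
  simp only [Complex.inner, Complex.sq_norm, Complex.normSq_apply, Complex.mul_re, Complex.mul_im,
    Complex.conj_re, Complex.conj_im, Complex.I_re, Complex.I_im] at hpos ⊢
  field_simp
  ring

theorem lapC_congr {u v : ℂ → ℝ} {y : ℂ} (h : u =ᶠ[𝓝 y] v) : lapC u y = lapC v y := by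
  have hline (e : ℂ) : (fun s : ℝ => u (y + s * e)) =ᶠ[𝓝 0] fun s => v (y + s * e) := by
    have hcont : Continuous fun s : ℝ => y + s * e := by fun_prop
    have hT : Tendsto (fun s : ℝ => y + s * e) (𝓝 0) (𝓝 y) := by simpa using hcont.tendsto 0
    exact hT.eventually h
  have h1 := hline 1
  simp only [mul_one] at h1
  rw [lapC, lapC, h1.deriv.deriv_eq, (hline Complex.I).deriv.deriv_eq]

theorem sphereMode_pow (a b : ℝ) (y : ℂ) (n : ℕ) :
    sphereMode (⟨a, b⟩ : ℂ) (y ^ n) = 2 * ‖y‖ ^ n / (1 + ‖y‖ ^ (2 * n))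
      * (a * Real.cos (n * y.arg) + b * Real.sin (n * y.arg)) := by
  have hpolar : y ^ n = (‖y‖ ^ n : ℝ) * Complex.exp ((n * y.arg : ℝ) * Complex.I) := by
    conv_lhs => rw [← Complex.norm_mul_exp_arg_mul_I y]
    rw [mul_pow, ← Complex.exp_nat_mul]
    push_cast
    ring_nf
  rw [sphereMode, norm_pow, ← pow_mul, mul_comm 2 n, Complex.inner, hpolar]
  simp only [Complex.mul_re, Complex.mul_im, Complex.ofReal_re, Complex.ofReal_im,
    Complex.exp_ofReal_mul_I_re, Complex.exp_ofReal_mul_I_im, Complex.conj_re, Complex.conj_im]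
  ring

theorem stmt13 (N : ℕ) (a b : ℝ) (φ : ℂ → ℝ)
    (hφ : ∀ y : ℂ, y ≠ 0 →
      φ y = 2 * ‖y‖ ^ (N + 1) / (1 + ‖y‖ ^ (2 * N + 2))
              * (a * Real.cos ((N + 1 : ℝ) * Complex.arg y)
                 + b * Real.sin ((N + 1 : ℝ) * Complex.arg y))) :
    ∀ y : ℂ, y ≠ 0 →
      lapC φ y
        + 8 * (N + 1 : ℝ) ^ 2 * ‖y‖ ^ (2 * N)
            / (1 + ‖y‖ ^ (2 * N + 2)) ^ 2 * φ y = 0 := by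
  intro y hy
  have hagree : φ =ᶠ[𝓝 y] fun z => sphereMode (⟨a, b⟩ : ℂ) (z ^ (N + 1)) := by
    filter_upwards [isOpen_ne.mem_nhds hy] with z hz
    rw [hφ z hz, sphereMode_pow]
    push_cast
    ring_nf
  have hpow (z : ℂ) : HasDerivAt (fun z => z ^ (N + 1)) ((N + 1 : ℕ) * z ^ N) z := by
    simpa using hasDerivAt_pow (N + 1) z
  have hpow' : HasDerivAt (fun z : ℂ => ((N + 1 : ℕ) : ℂ) * z ^ N)
      ((N + 1 : ℕ) * (N * y ^ (N - 1))) y :=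
    (hasDerivAt_pow N y).const_mul _
  have hnorm_deriv : ‖((N + 1 : ℕ) : ℂ) * y ^ N‖ ^ 2 = (N + 1 : ℝ) ^ 2 * ‖y‖ ^ (2 * N) := by
    rw [norm_mul, norm_pow, Complex.norm_natCast]
    push_cast
    ring
  have hnorm_pow : ‖y ^ (N + 1)‖ ^ 2 = ‖y‖ ^ (2 * N + 2) := by
    rw [norm_pow]
    ring
  rw [lapC_congr hagree, lapC_sphereMode_comp _ hpow hpow', hagree.eq_of_nhds, hnorm_deriv,
    hnorm_pow]
  ring
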